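/- arXiv:2406.09276 — 4 statements merged into one kernel-verified Lean document; each statement's English description precedes it below -/
import Mathlib

section
/- Let V be a real vector space, a : V × V → ℝ a bilinear form, and (·,·) an inner product on V with induced norm ‖·‖. Suppose there exist norms ‖·‖_E on V and a constant c > 0 such that a(v,v) ≥ c‖v‖_E² for all v ∈ V. Define B((p,y),(q,z)) = β^{1/2} a(q,p) − (y,q) + (p,z) + β^{1/2} a(y,z) for fixed β > 0, and |||v|||² = β^{1/2}‖v‖_E² + ‖v‖². Then for every (p,y), B((p,y),(p−y, p+y)) ≥ min(c,1)·(|||p|||² + |||y|||²). -/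
open scoped RealInnerProductSpace

/-- Coercivity of the saddle point form tested at (p - y, p + y). -/
theorem stmt1 {V : Type*} [NormedAddCommGroup V] [InnerProductSpace ℝ V]
    (a : V →ₗ[ℝ] V →ₗ[ℝ] ℝ) (nE : V → ℝ) (c β : ℝ) (hc : 0 < c) (hβ : 0 < β)
    (hcoer : ∀ v : V, c * (nE v) ^ 2 ≤ a v v)
    (tri : V → ℝ)
    (htri : ∀ v : V, (tri v) ^ 2 = Real.sqrt β * (nE v) ^ 2 + ‖v‖ ^ 2) :
    ∀ p y : V,
      min c 1 * ((tri p) ^ 2 + (tri y) ^ 2) ≤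
        Real.sqrt β * a (p - y) p - ⟪y, p - y⟫ + ⟪p, p + y⟫ +
          Real.sqrt β * a y (p + y) := by
  intro p y
  have hsqrt : 0 < Real.sqrt β := Real.sqrt_pos.mpr hβ
  have hRHS : Real.sqrt β * a (p - y) p - ⟪y, p - y⟫ + ⟪p, p + y⟫ +
      Real.sqrt β * a y (p + y)
      = Real.sqrt β * (a p p + a y y) + (‖p‖ ^ 2 + ‖y‖ ^ 2) := by
    have h1 : a (p - y) p = a p p - a y p := by
      simp [map_sub]
    have h2 : (a y) (p + y) = a y p + a y y := by
      simp [map_add]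
    have h3 : ⟪y, p - y⟫ = ⟪y, p⟫ - ⟪y, y⟫ := inner_sub_right ..
    have h4 : ⟪p, p + y⟫ = ⟪p, p⟫ + ⟪p, y⟫ := inner_add_right ..
    have h5 : ⟪y, p⟫ = ⟪p, y⟫ := real_inner_comm ..
    have h6 : ⟪y, y⟫ = ‖y‖ ^ 2 := real_inner_self_eq_norm_sq y
    have h7 : ⟪p, p⟫ = ‖p‖ ^ 2 := real_inner_self_eq_norm_sq p
    rw [h1, h2, h3, h4, h5, h6, h7]
    ring
  rw [hRHS, htri p, htri y]
  have hm := min_le_left c 1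
  have hm1 := min_le_right c 1
  have hmpos : 0 < min c 1 := lt_min hc one_pos
  have hp := hcoer p
  have hy := hcoer y
  have hnp : min c 1 * (nE p) ^ 2 ≤ a p p :=
    le_trans (mul_le_mul_of_nonneg_right hm (sq_nonneg _)) hp
  have hny : min c 1 * (nE y) ^ 2 ≤ a y y :=
    le_trans (mul_le_mul_of_nonneg_right hm (sq_nonneg _)) hy
  have h1 : min c 1 * ‖p‖ ^ 2 ≤ ‖p‖ ^ 2 := by
    nlinarith [sq_nonneg ‖p‖]
  have h2 : min c 1 * ‖y‖ ^ 2 ≤ ‖y‖ ^ 2 := by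
    nlinarith [sq_nonneg ‖y‖]
  nlinarith [mul_le_mul_of_nonneg_left hnp hsqrt.le,
    mul_le_mul_of_nonneg_left hny hsqrt.le]
end

section
/- Let M be a symmetric positive definite n×n real matrix, A a real n×n matrix, and β > 0. Set S = M + β Aᵀ M⁻¹ A and Ŝ = (√β A + M)ᵀ M⁻¹ (√β A + M). If A is such that Ŝ is positive definite, then for every nonzero vector v, vᵀŜv = vᵀSv + √β vᵀ(A + Aᵀ)v, and consequently (vᵀSv)/(vᵀŜv) ≥ 1/2 if and only if vᵀSv ≥ √β vᵀ(A + Aᵀ)v. -/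
open Matrix

/-- vᵀŜv = vᵀSv + √β vᵀ(A+Aᵀ)v, and the Rayleigh quotient of S against Ŝ is ≥ 1/2
iff vᵀSv ≥ √β vᵀ(A+Aᵀ)v. -/
theorem stmt4 {n : ℕ} (M A : Matrix (Fin n) (Fin n) ℝ) (β : ℝ) (hβ : 0 < β)
    (hM : M.PosDef)
    (hShat : (((Real.sqrt β • A + M)ᵀ) * M⁻¹ * (Real.sqrt β • A + M)).PosDef) :
    ∀ v : Fin n → ℝ, v ≠ 0 →
      (v ⬝ᵥ (((Real.sqrt β • A + M)ᵀ) * M⁻¹ * (Real.sqrt β • A + M)).mulVec v =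
        v ⬝ᵥ (M + β • (Aᵀ * M⁻¹ * A)).mulVec v +
          Real.sqrt β * (v ⬝ᵥ (A + Aᵀ).mulVec v)) ∧
      ((1 / 2 : ℝ) ≤
          (v ⬝ᵥ (M + β • (Aᵀ * M⁻¹ * A)).mulVec v) /
            (v ⬝ᵥ (((Real.sqrt β • A + M)ᵀ) * M⁻¹ * (Real.sqrt β • A + M)).mulVec v) ↔
        Real.sqrt β * (v ⬝ᵥ (A + Aᵀ).mulVec v) ≤
          v ⬝ᵥ (M + β • (Aᵀ * M⁻¹ * A)).mulVec v) := by
  have hMsymm : Mᵀ = M := hM.isHermitian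
  have hd : IsUnit M.det := isUnit_iff_ne_zero.mpr hM.det_pos.ne'
  have hMinv : M⁻¹ * M = 1 := nonsing_inv_mul M hd
  have hMinvM : M * M⁻¹ = 1 := mul_nonsing_inv M hd
  have h1 : ∀ X : Matrix (Fin n) (Fin n) ℝ, M * (M⁻¹ * X) = X := fun X => by
    rw [← Matrix.mul_assoc, hMinvM, Matrix.one_mul]
  have hsq : Real.sqrt β * Real.sqrt β = β := Real.mul_self_sqrt hβ.le
  have key : ((Real.sqrt β • A + M)ᵀ) * M⁻¹ * (Real.sqrt β • A + M) =
      (M + β • (Aᵀ * M⁻¹ * A)) + Real.sqrt β • (A + Aᵀ) := by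
    simp only [transpose_add, transpose_smul, add_mul, mul_add, smul_mul_assoc,
      mul_smul_comm, hMsymm, Matrix.mul_assoc, h1, hMinv, Matrix.mul_one,
      smul_smul, hsq, smul_add]
    abel
  intro v hv
  have heq : v ⬝ᵥ (((Real.sqrt β • A + M)ᵀ) * M⁻¹ * (Real.sqrt β • A + M)).mulVec v =
      v ⬝ᵥ (M + β • (Aᵀ * M⁻¹ * A)).mulVec v + Real.sqrt β * (v ⬝ᵥ (A + Aᵀ).mulVec v) := by
    rw [key, add_mulVec, dotProduct_add, smul_mulVec, dotProduct_smul, smul_eq_mul]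
  refine ⟨heq, ?_⟩
  have ht : 0 < v ⬝ᵥ (((Real.sqrt β • A + M)ᵀ) * M⁻¹ * (Real.sqrt β • A + M)).mulVec v := by
    have := hShat.dotProduct_mulVec_pos hv
    simpa using this
  rw [le_div_iff₀ ht, heq]
  constructor <;> intro h <;> nlinarith
end

section
/- Let M be SPD and A real square with A + Aᵀ positive semidefinite, β > 0. With S = M + βAᵀM⁻¹A and Ŝ = (√βA+M)ᵀM⁻¹(√βA+M), every eigenvalue of Ŝ⁻¹S lies in the interval (0, 1]; in particular vᵀSv ≤ vᵀŜv for all v. -/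
/-!
Since `M` is symmetric, expanding `Ŝ` gives `Ŝ = S + √β (A + Aᵀ)`, a positive semidefinite
perturbation of the positive definite `S`. An eigenpair `Ŝ⁻¹ S x = λ x` means `S x = λ Ŝ x`, so
`λ = xᵀSx / xᵀŜx`, a quotient of positive numbers with numerator at most the denominator.
-/

open Matrix

variable {n : Type*} [Fintype n]

theorem dotProduct_mulVec_le_add_of_posSemidef {S P : Matrix n n ℝ} (hP : P.PosSemidef)
    (v : n → ℝ) : v ⬝ᵥ S *ᵥ v ≤ v ⬝ᵥ (S + P) *ᵥ v := by
  rw [add_mulVec, dotProduct_add]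
  exact le_add_of_nonneg_right (hP.dotProduct_mulVec_nonneg v)

variable [DecidableEq n]

theorem transpose_smul_add_mul_inv_mul_smul_add {R : Type*} [CommRing R] {M : Matrix n n R}
    (hMt : Mᵀ = M) (hM : IsUnit M.det) (A : Matrix n n R) (s : R) :
    (s • A + M)ᵀ * M⁻¹ * (s • A + M) = M + (s * s) • (Aᵀ * M⁻¹ * A) + s • (A + Aᵀ) := by
  rw [transpose_add, transpose_smul, hMt]
  simp only [add_mul, mul_add, Matrix.smul_mul, Matrix.mul_smul, smul_smul, Matrix.mul_assoc,
    nonsing_inv_mul M hM, mul_nonsing_inv M hM, mul_one, one_mul, smul_add]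
  abel

theorem Matrix.PosDef.eigenvalue_inv_add_mul_mem_Ioc {S P : Matrix n n ℝ} (hS : S.PosDef)
    (hP : P.PosSemidef) {lam : ℝ} {x : n → ℝ} (hx : x ≠ 0)
    (h : ((S + P)⁻¹ * S) *ᵥ x = lam • x) : lam ∈ Set.Ioc 0 1 := by
  have hT : (S + P).PosDef := hS.add_posSemidef hP
  have hSx : S *ᵥ x = lam • (S + P) *ᵥ x := by
    have := congrArg ((S + P) *ᵥ ·) h
    rwa [mulVec_mulVec, ← Matrix.mul_assoc,
      mul_nonsing_inv _ ((isUnit_iff_isUnit_det _).mp hT.isUnit), Matrix.one_mul,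
      mulVec_smul] at this
  have hquot : x ⬝ᵥ S *ᵥ x = lam * (x ⬝ᵥ (S + P) *ᵥ x) := by
    rw [hSx, dotProduct_smul, smul_eq_mul]
  have hSpos : 0 < x ⬝ᵥ S *ᵥ x := hS.dotProduct_mulVec_pos hx
  have hTpos : 0 < x ⬝ᵥ (S + P) *ᵥ x := hT.dotProduct_mulVec_pos hx
  have hle := dotProduct_mulVec_le_add_of_posSemidef (S := S) hP x
  rw [hquot] at hSpos hle
  exact ⟨pos_of_mul_pos_left hSpos hTpos.le, (mul_le_iff_le_one_left hTpos).mp hle⟩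

/-- If A + Aᵀ is positive semidefinite, every eigenvalue of Ŝ⁻¹S lies in (0,1];
in particular vᵀSv ≤ vᵀŜv for all v. -/
theorem stmt5 {n : ℕ} (M A : Matrix (Fin n) (Fin n) ℝ) (β : ℝ) (hβ : 0 < β)
    (hM : M.PosDef) (hA : (A + Aᵀ).PosSemidef) :
    (∀ (lam : ℝ) (x : Fin n → ℝ), x ≠ 0 →
      (((((Real.sqrt β • A + M)ᵀ) * M⁻¹ * (Real.sqrt β • A + M))⁻¹ *
          (M + β • (Aᵀ * M⁻¹ * A))).mulVec x = lam • x) → 0 < lam ∧ lam ≤ 1) ∧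
    ∀ v : Fin n → ℝ,
      v ⬝ᵥ (M + β • (Aᵀ * M⁻¹ * A)).mulVec v ≤
        v ⬝ᵥ (((Real.sqrt β • A + M)ᵀ) * M⁻¹ * (Real.sqrt β • A + M)).mulVec v := by
  have hMt : Mᵀ = M := hM.isHermitian.eq
  have hŜ : (Real.sqrt β • A + M)ᵀ * M⁻¹ * (Real.sqrt β • A + M) =
      (M + β • (Aᵀ * M⁻¹ * A)) + Real.sqrt β • (A + Aᵀ) := by
    rw [transpose_smul_add_mul_inv_mul_smul_add hMt ((isUnit_iff_isUnit_det _).mp hM.isUnit),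
      Real.mul_self_sqrt hβ.le]
  have hS : (M + β • (Aᵀ * M⁻¹ * A)).PosDef :=
    hM.add_posSemidef ((hM.inv.posSemidef.conjTranspose_mul_mul_same A).smul hβ.le)
  have hP : (Real.sqrt β • (A + Aᵀ)).PosSemidef := hA.smul (Real.sqrt_nonneg β)
  rw [hŜ]
  exact ⟨fun _ _ hx h => hS.eigenvalue_inv_add_mul_mem_Ioc hP hx h,
    dotProduct_mulVec_le_add_of_posSemidef hP⟩
end

section
/- Let V be a real vector space with inner product (·,·) and bilinear form a satisfying: (i) a(v,v) ≥ c(ε|v|₁² + ‖v‖²) for all v, with c > 0, ε > 0, (ii) |a(p,q)| ≤ C(ε|p|₁|q|₁ + ‖p‖|q|₁ + ‖p‖‖q‖) for all p,q, where |·|₁ is a seminorm and ‖·‖ the inner product norm. Define ‖v‖_{ε,β}² = β^{1/2}(ε|v|₁² + ‖v‖²) + ‖v‖² and B((p,y),(q,z)) = β^{1/2}a(q,p) − (y,q) + (p,z) + β^{1/2}a(y,z). Then B((p,y),(q,z)) ≤ (C'/√ε)(‖p‖_{ε,β}² + ‖y‖_{ε,β}²)^{1/2}(‖q‖_{ε,β}²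 + ‖z‖_{ε,β}²)^{1/2} for a constant C' depending only on C. -/
open scoped RealInnerProductSpace

private lemma sq_le_imp (x r : ℝ) (hx : 0 ≤ x) (hr : 0 ≤ r) (h : x ^ 2 ≤ r ^ 2) : x ≤ r := by
  nlinarith

set_option maxHeartbeats 1000000 in
/-- Continuity of the saddle point bilinear form with constant C'/√ε, where
C' depends only on the continuity constant C of a. -/
theorem stmt8 (C : ℝ) (hC : 0 < C) :
    ∃ C' : ℝ, 0 < C' ∧
      ∀ (V : Type) [NormedAddCommGroup V] [InnerProductSpace ℝ V]
        (a : V →ₗ[ℝ] V →ₗ[ℝ] ℝ) (s1 : V → ℝ) (c ε β : ℝ),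
        0 < c → 0 < ε → ε ≤ 1 → 0 < β →
        (∀ v : V, 0 ≤ s1 v) →
        (∀ v : V, c * (ε * (s1 v) ^ 2 + ‖v‖ ^ 2) ≤ a v v) →
        (∀ p q : V, |a p q| ≤ C * (ε * s1 p * s1 q + ‖p‖ * s1 q + ‖p‖ * ‖q‖)) →
        ∀ p y q z : V,
          Real.sqrt β * a q p - ⟪y, q⟫ + ⟪p, z⟫ + Real.sqrt β * a y z ≤
            (C' / Real.sqrt ε) *
              Real.sqrt
                ((Real.sqrt β * (ε * (s1 p) ^ 2 + ‖p‖ ^ 2) + ‖p‖ ^ 2) +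
                  (Real.sqrt β * (ε * (s1 y) ^ 2 + ‖y‖ ^ 2) + ‖y‖ ^ 2)) *
              Real.sqrt
                ((Real.sqrt β * (ε * (s1 q) ^ 2 + ‖q‖ ^ 2) + ‖q‖ ^ 2) +
                  (Real.sqrt β * (ε * (s1 z) ^ 2 + ‖z‖ ^ 2) + ‖z‖ ^ 2)) := by
  refine ⟨6 * C + 2, by linarith, ?_⟩
  intro V _ _ a s1 c ε β hc hε hε1 hβ hs1 hcoer hbnd p y q z
  have hb0 : (0:ℝ) ≤ Real.sqrt β := Real.sqrt_nonneg β
  set b := Real.sqrt β with hbdef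
  set t := Real.sqrt ε with htdef
  have ht0 : 0 < t := Real.sqrt_pos.mpr hε
  have htsq : t ^ 2 = ε := Real.sq_sqrt hε.le
  have ht1 : t ≤ 1 := Real.sqrt_le_one.mpr hε1
  set u := Real.sqrt b with hudef
  have hu0 : 0 ≤ u := Real.sqrt_nonneg b
  have husq : u ^ 2 = b := Real.sq_sqrt hb0
  set S1 := (b * (ε * (s1 p) ^ 2 + ‖p‖ ^ 2) + ‖p‖ ^ 2) +
      (b * (ε * (s1 y) ^ 2 + ‖y‖ ^ 2) + ‖y‖ ^ 2) with hS1def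
  set S2 := (b * (ε * (s1 q) ^ 2 + ‖q‖ ^ 2) + ‖q‖ ^ 2) +
      (b * (ε * (s1 z) ^ 2 + ‖z‖ ^ 2) + ‖z‖ ^ 2) with hS2def
  have hsp := hs1 p; have hsy := hs1 y; have hsq' := hs1 q; have hsz := hs1 z
  have hS1exp : S1 = b * ε * s1 p ^ 2 + b * ‖p‖ ^ 2 + ‖p‖ ^ 2 +
      (b * ε * s1 y ^ 2 + b * ‖y‖ ^ 2 + ‖y‖ ^ 2) := by rw [hS1def]; ring
  have hS2exp : S2 = b * ε * s1 q ^ 2 + b * ‖q‖ ^ 2 + ‖q‖ ^ 2 +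
      (b * ε * s1 z ^ 2 + b * ‖z‖ ^ 2 + ‖z‖ ^ 2) := by rw [hS2def]; ring
  have c1 : 0 ≤ b * ε * s1 p ^ 2 := by positivity
  have c2 : 0 ≤ b * ‖p‖ ^ 2 := by positivity
  have c3 : 0 ≤ b * ε * s1 y ^ 2 := by positivity
  have c4 : 0 ≤ b * ‖y‖ ^ 2 := by positivity
  have c5 : 0 ≤ b * ε * s1 q ^ 2 := by positivity
  have c6 : 0 ≤ b * ‖q‖ ^ 2 := by positivity
  have c7 : 0 ≤ b * ε * s1 z ^ 2 := by positivity
  have c8 : 0 ≤ b * ‖z‖ ^ 2 := by positivity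
  have hS1nn : 0 ≤ S1 := by rw [hS1exp]; linarith [sq_nonneg ‖p‖, sq_nonneg ‖y‖]
  have hS2nn : 0 ≤ S2 := by rw [hS2exp]; linarith [sq_nonneg ‖q‖, sq_nonneg ‖z‖]
  set r1 := Real.sqrt S1 with hr1def
  set r2 := Real.sqrt S2 with hr2def
  have hr10 : 0 ≤ r1 := Real.sqrt_nonneg S1
  have hr20 : 0 ≤ r2 := Real.sqrt_nonneg S2
  have hr1sq : r1 ^ 2 = S1 := Real.sq_sqrt hS1nn
  have hr2sq : r2 ^ 2 = S2 := Real.sq_sqrt hS2nn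
  -- elementary bounds against r1
  have hNp : ‖p‖ ≤ r1 := sq_le_imp _ _ (norm_nonneg p) hr10
    (by rw [hr1sq, hS1exp]; linarith [sq_nonneg ‖y‖])
  have hNy : ‖y‖ ≤ r1 := sq_le_imp _ _ (norm_nonneg y) hr10
    (by rw [hr1sq, hS1exp]; linarith [sq_nonneg ‖p‖])
  have hNq : ‖q‖ ≤ r2 := sq_le_imp _ _ (norm_nonneg q) hr20
    (by rw [hr2sq, hS2exp]; linarith [sq_nonneg ‖z‖])
  have hNz : ‖z‖ ≤ r2 := sq_le_imp _ _ (norm_nonneg z) hr20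
    (by rw [hr2sq, hS2exp]; linarith [sq_nonneg ‖q‖])
  have esq : ∀ w : V, (u * ‖w‖) ^ 2 = b * ‖w‖ ^ 2 := fun w => by
    rw [mul_pow, husq]
  have esq2 : ∀ w : V, (u * t * s1 w) ^ 2 = b * ε * s1 w ^ 2 := fun w => by
    rw [mul_pow, mul_pow, husq, htsq]
  have esq3 : ∀ w : V, (u * s1 w) ^ 2 = b * s1 w ^ 2 := fun w => by
    rw [mul_pow, husq]
  have hBp : u * ‖p‖ ≤ r1 := sq_le_imp _ _ (by positivity) hr10
    (by rw [esq, hr1sq, hS1exp]; linarith [sq_nonneg ‖p‖, sq_nonneg ‖y‖])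
  have hBy : u * ‖y‖ ≤ r1 := sq_le_imp _ _ (by positivity) hr10
    (by rw [esq, hr1sq, hS1exp]; linarith [sq_nonneg ‖p‖, sq_nonneg ‖y‖])
  have hBq : u * ‖q‖ ≤ r2 := sq_le_imp _ _ (by positivity) hr20
    (by rw [esq, hr2sq, hS2exp]; linarith [sq_nonneg ‖q‖, sq_nonneg ‖z‖])
  have hBz : u * ‖z‖ ≤ r2 := sq_le_imp _ _ (by positivity) hr20
    (by rw [esq, hr2sq, hS2exp]; linarith [sq_nonneg ‖q‖, sq_nonneg ‖z‖])
  have hEp : u * t * s1 p ≤ r1 := sq_le_imp _ _ (by positivity) hr10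
    (by rw [esq2, hr1sq, hS1exp]; linarith [sq_nonneg ‖p‖, sq_nonneg ‖y‖])
  have hEy : u * t * s1 y ≤ r1 := sq_le_imp _ _ (by positivity) hr10
    (by rw [esq2, hr1sq, hS1exp]; linarith [sq_nonneg ‖p‖, sq_nonneg ‖y‖])
  have hEq' : u * t * s1 q ≤ r2 := sq_le_imp _ _ (by positivity) hr20
    (by rw [esq2, hr2sq, hS2exp]; linarith [sq_nonneg ‖q‖, sq_nonneg ‖z‖])
  have hEz : u * t * s1 z ≤ r2 := sq_le_imp _ _ (by positivity) hr20
    (by rw [esq2, hr2sq, hS2exp]; linarith [sq_nonneg ‖q‖, sq_nonneg ‖z‖])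
  have hSp : u * s1 p ≤ r1 / t := sq_le_imp _ _ (by positivity) (by positivity) (by
    rw [div_pow, le_div_iff₀ (by positivity), esq3, htsq, hr1sq, hS1exp]
    linarith [sq_nonneg ‖p‖, sq_nonneg ‖y‖])
  have hSz : u * s1 z ≤ r2 / t := sq_le_imp _ _ (by positivity) (by positivity) (by
    rw [div_pow, le_div_iff₀ (by positivity), esq3, htsq, hr2sq, hS2exp]
    linarith [sq_nonneg ‖q‖, sq_nonneg ‖z‖])
  -- bound b * a q p
  have habs1 := hbnd q p
  have habs2 := hbnd y z
  have h1 : b * (a q p) ≤ 3 * C * (r1 * r2) / t := by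
    have hle : a q p ≤ C * (ε * s1 q * s1 p + ‖q‖ * s1 p + ‖q‖ * ‖p‖) :=
      (le_abs_self _).trans habs1
    have e1 : b * (ε * s1 q * s1 p) = (u * t * s1 q) * (u * t * s1 p) := by
      rw [← husq, ← htsq]; ring
    have e2 : b * (‖q‖ * s1 p) = (u * ‖q‖) * (u * s1 p) := by rw [← husq]; ring
    have e3 : b * (‖q‖ * ‖p‖) = (u * ‖q‖) * (u * ‖p‖) := by rw [← husq]; ring
    have m1 : (u * t * s1 q) * (u * t * s1 p) ≤ r2 * r1 :=
      mul_le_mul hEq' hEp (by positivity) hr20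
    have m2 : (u * ‖q‖) * (u * s1 p) ≤ r2 * (r1 / t) :=
      mul_le_mul hBq hSp (by positivity) hr20
    have m3 : (u * ‖q‖) * (u * ‖p‖) ≤ r2 * r1 :=
      mul_le_mul hBq hBp (by positivity) hr20
    have step : b * (a q p) ≤ C * (r2 * r1 + r2 * (r1 / t) + r2 * r1) := by
      calc b * (a q p) ≤ b * (C * (ε * s1 q * s1 p + ‖q‖ * s1 p + ‖q‖ * ‖p‖)) :=
            mul_le_mul_of_nonneg_left hle hb0
        _ = C * (b * (ε * s1 q * s1 p) + b * (‖q‖ * s1 p) + b * (‖q‖ * ‖p‖)) := by ring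
        _ ≤ C * (r2 * r1 + r2 * (r1 / t) + r2 * r1) := by
            rw [e1, e2, e3]; exact mul_le_mul_of_nonneg_left (by linarith) hC.le
    have hrr : r2 * r1 ≤ r2 * (r1 / t) := by
      have hti : (1:ℝ) ≤ t⁻¹ := by rw [← one_div]; exact one_le_one_div ht0 ht1
      calc r2 * r1 = (r2 * r1) * 1 := by ring
        _ ≤ (r2 * r1) * t⁻¹ := mul_le_mul_of_nonneg_left hti (mul_nonneg hr20 hr10)
        _ = r2 * (r1 / t) := by rw [div_eq_mul_inv]; ring
    calc b * (a q p) ≤ C * (r2 * r1 + r2 * (r1 / t) + r2 * r1) := step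
      _ ≤ C * (3 * (r2 * (r1 / t))) := by
          exact mul_le_mul_of_nonneg_left (by linarith) hC.le
      _ = 3 * C * (r1 * r2) / t := by ring
  have h2 : b * (a y z) ≤ 3 * C * (r1 * r2) / t := by
    have hle : a y z ≤ C * (ε * s1 y * s1 z + ‖y‖ * s1 z + ‖y‖ * ‖z‖) :=
      (le_abs_self _).trans habs2
    have e1 : b * (ε * s1 y * s1 z) = (u * t * s1 y) * (u * t * s1 z) := by
      rw [← husq, ← htsq]; ring
    have e2 : b * (‖y‖ * s1 z) = (u * ‖y‖) * (u * s1 z) := by rw [← husq]; ring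
    have e3 : b * (‖y‖ * ‖z‖) = (u * ‖y‖) * (u * ‖z‖) := by rw [← husq]; ring
    have m1 : (u * t * s1 y) * (u * t * s1 z) ≤ r1 * r2 :=
      mul_le_mul hEy hEz (by positivity) hr10
    have m2 : (u * ‖y‖) * (u * s1 z) ≤ r1 * (r2 / t) :=
      mul_le_mul hBy hSz (by positivity) hr10
    have m3 : (u * ‖y‖) * (u * ‖z‖) ≤ r1 * r2 :=
      mul_le_mul hBy hBz (by positivity) hr10
    have step : b * (a y z) ≤ C * (r1 * r2 + r1 * (r2 / t) + r1 * r2) := by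
      calc b * (a y z) ≤ b * (C * (ε * s1 y * s1 z + ‖y‖ * s1 z + ‖y‖ * ‖z‖)) :=
            mul_le_mul_of_nonneg_left hle hb0
        _ = C * (b * (ε * s1 y * s1 z) + b * (‖y‖ * s1 z) + b * (‖y‖ * ‖z‖)) := by ring
        _ ≤ C * (r1 * r2 + r1 * (r2 / t) + r1 * r2) := by
            rw [e1, e2, e3]; exact mul_le_mul_of_nonneg_left (by linarith) hC.le
    have hrr : r1 * r2 ≤ r1 * (r2 / t) := by
      have hti : (1:ℝ) ≤ t⁻¹ := by rw [← one_div]; exact one_le_one_div ht0 ht1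
      calc r1 * r2 = (r1 * r2) * 1 := by ring
        _ ≤ (r1 * r2) * t⁻¹ := mul_le_mul_of_nonneg_left hti (mul_nonneg hr10 hr20)
        _ = r1 * (r2 / t) := by rw [div_eq_mul_inv]; ring
    calc b * (a y z) ≤ C * (r1 * r2 + r1 * (r2 / t) + r1 * r2) := step
      _ ≤ C * (3 * (r1 * (r2 / t))) := by
          exact mul_le_mul_of_nonneg_left (by linarith) hC.le
      _ = 3 * C * (r1 * r2) / t := by ring
  have hrr' : r1 * r2 ≤ r1 * r2 / t := by
    have hti : (1:ℝ) ≤ t⁻¹ := by rw [← one_div]; exact one_le_one_div ht0 ht1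
    calc r1 * r2 = (r1 * r2) * 1 := by ring
      _ ≤ (r1 * r2) * t⁻¹ := mul_le_mul_of_nonneg_left hti (mul_nonneg hr10 hr20)
      _ = r1 * r2 / t := by rw [div_eq_mul_inv]
  have h3 : -⟪y, q⟫ ≤ r1 * r2 / t := by
    have := abs_real_inner_le_norm y q
    have hn : -⟪y, q⟫ ≤ ‖y‖ * ‖q‖ := by
      have := neg_abs_le ⟪y, q⟫; linarith
    have : ‖y‖ * ‖q‖ ≤ r1 * r2 := mul_le_mul hNy hNq (norm_nonneg q) hr10
    linarith
  have h4 : ⟪p, z⟫ ≤ r1 * r2 / t := by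
    have h := real_inner_le_norm p z
    have : ‖p‖ * ‖z‖ ≤ r1 * r2 := mul_le_mul hNp hNz (norm_nonneg z) hr10
    linarith
  have h1' : b * (a q p) ≤ 3 * (C * (r1 * r2 / t)) := by
    calc b * (a q p) ≤ 3 * C * (r1 * r2) / t := h1
      _ = 3 * (C * (r1 * r2 / t)) := by ring
  have h2' : b * (a y z) ≤ 3 * (C * (r1 * r2 / t)) := by
    calc b * (a y z) ≤ 3 * C * (r1 * r2) / t := h2
      _ = 3 * (C * (r1 * r2 / t)) := by ring
  calc b * (a q p) - ⟪y, q⟫ + ⟪p, z⟫ + b * (a y z)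
      ≤ 6 * (C * (r1 * r2 / t)) + 2 * (r1 * r2 / t) := by linarith
    _ = (6 * C + 2) / t * r1 * r2 := by ring
end
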